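/- Let dρ₁(τ) = w(τ)τ^{1/3}dτ and dρ₂(τ) = w(τ)τ^{2/3}dτ be measures on E = [0,α³] with w ≥ 0 integrable. If ρ₂ is regular in the sense of Stahl–Totik (i.e. the monic orthogonal polynomials l̃_n of ρ₂ satisfy lim ‖l̃_n‖_{L²(ρ₂)}^{1/n} = cap(E)), then ρ₁ is also regular, i.e. the monic orthogonal polynomials l_n of ρ₁ satisfy lim ‖l_n‖_{L²(ρ₁)}^{1/n} = cap(supp ρ₁). -/

import Mathlib

open Polynomial MeasureTheory Set Filter

noncomputable section

/-- The real cube root. -/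
def rcbrt (x : ℝ) : ℝ := Real.sign x * |x| ^ ((1 : ℝ) / 3)

/-- The measure `dρ₁(τ) = w(τ) τ^{1/3} dτ` on `E = [0,α³]`. -/
def rho₁ (α : ℝ) (w : ℝ → ℝ) : Measure ℝ :=
  (volume.restrict (Set.Icc 0 (α ^ 3))).withDensity
    (fun τ => ENNReal.ofReal (w τ * rcbrt τ))

/-- The measure `dρ₂(τ) = w(τ) τ^{2/3} dτ` on `E = [0,α³]`. -/
def rho₂ (α : ℝ) (w : ℝ → ℝ) : Measure ℝ :=
  (volume.restrict (Set.Icc 0 (α ^ 3))).withDensity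
    (fun τ => ENNReal.ofReal (w τ * (rcbrt τ) ^ 2))

lemma rcbrt_nonneg {τ : ℝ} (h : 0 ≤ τ) : 0 ≤ rcbrt τ := by
  rcases eq_or_lt_of_le h with h0 | h0
  · simp [rcbrt, ← h0]
  · unfold rcbrt
    rw [Real.sign_of_pos h0, one_mul]
    positivity

lemma rcbrt_le {α τ : ℝ} (hα : 0 < α) (h1 : 0 ≤ τ) (h2 : τ ≤ α ^ 3) : rcbrt τ ≤ α := by
  rcases eq_or_lt_of_le h1 with h0 | h0
  · simp [rcbrt, ← h0]; exact hα.le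
  · unfold rcbrt
    rw [Real.sign_of_pos h0, one_mul, abs_of_pos h0]
    calc τ ^ ((1:ℝ)/3) ≤ (α ^ 3) ^ ((1:ℝ)/3) :=
          Real.rpow_le_rpow h1 h2 (by norm_num)
      _ = α := by
          rw [← Real.rpow_natCast α 3, ← Real.rpow_mul hα.le]
          norm_num

lemma rpow_one_div_tendsto_one {x : ℝ} (hx : 0 < x) :
    Tendsto (fun n : ℕ => x ^ (1/(n:ℝ))) atTop (nhds 1) := by
  have h : Tendsto (fun n : ℕ => Real.log x * (1/(n:ℝ))) atTop (nhds (Real.log x * 0)) :=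
    tendsto_one_div_atTop_nhds_zero_nat.const_mul _
  rw [mul_zero] at h
  have := (Real.continuous_exp.tendsto 0).comp h
  rw [Real.exp_zero] at this
  refine this.congr fun n => ?_
  simp only [Function.comp]
  rw [Real.rpow_def_of_pos hx]

-- a.e. membership
lemma ae_mem_rho₁ (α : ℝ) (w : ℝ → ℝ) :
    ∀ᵐ τ ∂(rho₁ α w), τ ∈ Set.Icc (0:ℝ) (α ^ 3) := by
  rw [ae_iff]
  have : {τ : ℝ | ¬ τ ∈ Set.Icc (0:ℝ) (α ^ 3)} = (Set.Icc (0:ℝ) (α ^ 3))ᶜ := rfl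
  rw [this, rho₁, withDensity_apply _ measurableSet_Icc.compl,
    Measure.restrict_restrict measurableSet_Icc.compl, Set.compl_inter_self]
  simp

lemma ae_mem_rho₂ (α : ℝ) (w : ℝ → ℝ) :
    ∀ᵐ τ ∂(rho₂ α w), τ ∈ Set.Icc (0:ℝ) (α ^ 3) := by
  rw [ae_iff]
  have : {τ : ℝ | ¬ τ ∈ Set.Icc (0:ℝ) (α ^ 3)} = (Set.Icc (0:ℝ) (α ^ 3))ᶜ := rfl
  rw [this, rho₂, withDensity_apply _ measurableSet_Icc.compl,
    Measure.restrict_restrict measurableSet_Icc.compl, Set.compl_inter_self]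
  simp

-- finiteness of rho₁
lemma rho₁_fin (α : ℝ) (hα : 0 < α) (w : ℝ → ℝ)
    (hw : ∀ τ ∈ Set.Icc (0:ℝ) (α ^ 3), 0 ≤ w τ)
    (hwint : IntegrableOn w (Set.Icc (0:ℝ) (α ^ 3)) volume) :
    IsFiniteMeasure (rho₁ α w) := by
  constructor
  rw [rho₁, withDensity_apply _ MeasurableSet.univ, Measure.restrict_univ]
  calc ∫⁻ τ, ENNReal.ofReal (w τ * rcbrt τ) ∂(volume.restrict (Set.Icc 0 (α ^ 3)))
      ≤ ∫⁻ τ, ENNReal.ofReal α * ‖w τ‖₊ ∂(volume.restrict (Set.Icc 0 (α ^ 3))) := by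
        refine lintegral_mono_ae ?_
        filter_upwards [ae_restrict_mem measurableSet_Icc] with τ hτ
        rw [show ((‖w τ‖₊ : NNReal) : ENNReal) = ENNReal.ofReal |w τ| from Real.enorm_eq_ofReal_abs _, ← ENNReal.ofReal_mul hα.le]
        refine ENNReal.ofReal_le_ofReal ?_
        calc w τ * rcbrt τ ≤ w τ * α := by
              exact mul_le_mul_of_nonneg_left (rcbrt_le hα hτ.1 hτ.2) (hw τ hτ)
          _ = α * w τ := mul_comm _ _
          _ ≤ α * |w τ| := mul_le_mul_of_nonneg_left (le_abs_self _) hα.le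
    _ = ENNReal.ofReal α * ∫⁻ τ, ‖w τ‖₊ ∂(volume.restrict (Set.Icc 0 (α ^ 3))) :=
        lintegral_const_mul' _ _ ENNReal.ofReal_ne_top
    _ < ⊤ := ENNReal.mul_lt_top ENNReal.ofReal_lt_top hwint.2

-- comparison
lemma rho₂_le (α : ℝ) (hα : 0 < α) (w : ℝ → ℝ)
    (hw : ∀ τ ∈ Set.Icc (0:ℝ) (α ^ 3), 0 ≤ w τ) :
    rho₂ α w ≤ (ENNReal.ofReal α) • rho₁ α w := by
  refine Measure.le_iff.mpr fun s hs => ?_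
  rw [Measure.smul_apply, smul_eq_mul, rho₁, rho₂, withDensity_apply _ hs,
    withDensity_apply _ hs, ← lintegral_const_mul' _ _ ENNReal.ofReal_ne_top,
    Measure.restrict_restrict hs]
  refine lintegral_mono_ae ?_
  filter_upwards [ae_restrict_mem (hs.inter measurableSet_Icc)] with τ hτ
  obtain ⟨-, hτ⟩ := hτ
  rw [← ENNReal.ofReal_mul hα.le]
  refine ENNReal.ofReal_le_ofReal ?_
  have h1 := rcbrt_nonneg hτ.1
  have h2 := rcbrt_le hα hτ.1 hτ.2
  calc w τ * rcbrt τ ^ 2 = rcbrt τ * (w τ * rcbrt τ) := by ring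
    _ ≤ α * (w τ * rcbrt τ) :=
        mul_le_mul_of_nonneg_right h2 (mul_nonneg (hw τ hτ) h1)

lemma integrable_poly {E : Set ℝ} (hE : IsCompact E) (μ : Measure ℝ) [IsFiniteMeasure μ]
    (hae : ∀ᵐ τ ∂μ, τ ∈ E) (p : Polynomial ℝ) :
    Integrable (fun τ => p.eval τ) μ := by
  obtain ⟨C, hC⟩ := hE.exists_bound_of_continuousOn p.continuous_aeval.continuousOn
  refine ⟨(p.continuous_aeval.aestronglyMeasurable), ?_⟩
  refine HasFiniteIntegral.of_bounded (C := C) ?_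
  filter_upwards [hae] with τ hτ
  simpa using hC τ hτ

lemma min_ortho {E : Set ℝ} (hE : IsCompact E) (μ : Measure ℝ) [IsFiniteMeasure μ]
    (hae : ∀ᵐ τ ∂μ, τ ∈ E)
    (q p : Polynomial ℝ) (n : ℕ) (hq : q.Monic) (hqd : q.natDegree = n)
    (hortho : ∀ j < n, ∫ τ, q.eval τ * τ ^ j ∂μ = 0)
    (hp : p.Monic) (hpd : p.natDegree = n) :
    ∫ τ, (q.eval τ)^2 ∂μ ≤ ∫ τ, (p.eval τ)^2 ∂μ := by
  have hint := integrable_poly hE μ hae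
  by_cases hpq : p = q
  · rw [hpq]
  set r := p - q with hr
  have hr0 : r ≠ 0 := sub_ne_zero.mpr hpq
  have hdeg : r.natDegree < n := by
    rw [Polynomial.natDegree_lt_iff_degree_lt hr0]
    rw [← hpd, ← Polynomial.degree_eq_natDegree hp.ne_zero]
    exact Polynomial.degree_sub_lt
      (by rw [Polynomial.degree_eq_natDegree hp.ne_zero,
              Polynomial.degree_eq_natDegree hq.ne_zero, hpd, hqd])
      hp.ne_zero (by rw [hp.leadingCoeff, hq.leadingCoeff])
  -- orthogonality to r
  have hqr : ∫ τ, q.eval τ * r.eval τ ∂μ = 0 := by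
    have heval : ∀ τ : ℝ, q.eval τ * r.eval τ
        = ∑ i ∈ Finset.range n, r.coeff i * (q.eval τ * τ ^ i) := by
      intro τ
      rw [Polynomial.eval_eq_sum_range' hdeg τ, Finset.mul_sum]
      congr 1; ext i; ring
    have hint' : ∀ i ∈ Finset.range n,
        Integrable (fun τ => r.coeff i * (q.eval τ * τ ^ i)) μ := by
      intro i _
      have := (hint (q * Polynomial.X ^ i)).const_mul (r.coeff i)
      refine this.congr ?_
      filter_upwards with τ
      simp [mul_comm]
    calc ∫ τ, q.eval τ * r.eval τ ∂μ
        = ∫ τ, ∑ i ∈ Finset.range n, r.coeff i * (q.eval τ * τ ^ i) ∂μ := by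
          simp_rw [heval]
      _ = ∑ i ∈ Finset.range n, ∫ τ, r.coeff i * (q.eval τ * τ ^ i) ∂μ :=
          integral_finset_sum _ hint'
      _ = 0 := by
          refine Finset.sum_eq_zero fun i hi => ?_
          rw [integral_const_mul, hortho i (Finset.mem_range.mp hi), mul_zero]
  -- expansion
  have hintq2 : Integrable (fun τ => (q.eval τ)^2) μ := by
    have := hint (q^2); refine this.congr ?_; filter_upwards with τ; simp
  have hintr2 : Integrable (fun τ => (r.eval τ)^2) μ := by
    have := hint (r^2); refine this.congr ?_; filter_upwards with τ; simp
  have hintqr : Integrable (fun τ => 2 * (q.eval τ * r.eval τ)) μ := by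
    have := (hint (q * r)).const_mul 2; refine this.congr ?_; filter_upwards with τ; simp
  have hpt : ∀ τ : ℝ, (p.eval τ)^2
      = (q.eval τ)^2 + (2 * (q.eval τ * r.eval τ) + (r.eval τ)^2) := by
    intro τ
    have hpqr : p = q + r := by rw [hr]; ring
    rw [hpqr, Polynomial.eval_add]; ring
  have hexp : ∫ τ, (p.eval τ)^2 ∂μ
      = ∫ τ, (q.eval τ)^2 ∂μ + (∫ τ, 2 * (q.eval τ * r.eval τ) ∂μ + ∫ τ, (r.eval τ)^2 ∂μ) := by
    calc ∫ τ, (p.eval τ)^2 ∂μ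
        = ∫ τ, ((q.eval τ)^2 + (2 * (q.eval τ * r.eval τ) + (r.eval τ)^2)) ∂μ := by
          simp_rw [hpt]
      _ = ∫ τ, (q.eval τ)^2 ∂μ + ∫ τ, (2 * (q.eval τ * r.eval τ) + (r.eval τ)^2) ∂μ :=
          integral_add hintq2 (hintqr.add hintr2)
      _ = ∫ τ, (q.eval τ)^2 ∂μ + (∫ τ, 2 * (q.eval τ * r.eval τ) ∂μ + ∫ τ, (r.eval τ)^2 ∂μ) := by
          rw [integral_add hintqr hintr2]
  rw [hexp]
  have h2 : ∫ τ, 2 * (q.eval τ * r.eval τ) ∂μ = 0 := by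
    rw [integral_const_mul, hqr, mul_zero]
  rw [h2, zero_add]
  have : 0 ≤ ∫ τ, (r.eval τ)^2 ∂μ := integral_nonneg fun τ => sq_nonneg _
  linarith

/-- if `ρ₂` is regular in the sense of Stahl–Totik, i.e. the monic
orthogonal polynomials `l̃_n` of `ρ₂` satisfy `‖l̃_n‖_{L²(ρ₂)}^{1/n} → c`
(`c` the capacity of the support), then so is `ρ₁`: its monic orthogonal
polynomials `l_n` satisfy `‖l_n‖_{L²(ρ₁)}^{1/n} → c`, by the Chebyshev-polynomial
upper bound and the comparison `‖l̃_n‖_{L²(ρ₂)} ≤ α^{1/2} ‖l_n‖_{L²(ρ₁)}`. -/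
theorem statement18 (α : ℝ) (hα : 0 < α) (w : ℝ → ℝ)
    (hw : ∀ τ ∈ Set.Icc (0:ℝ) (α ^ 3), 0 ≤ w τ)
    (hwint : IntegrableOn w (Set.Icc (0:ℝ) (α ^ 3)) volume)
    (l ltil : ℕ → Polynomial ℝ)
    (hl : ∀ n, (l n).Monic ∧ (l n).natDegree = n ∧
      ∀ j < n, ∫ τ, (l n).eval τ * τ ^ j ∂(rho₁ α w) = 0)
    (hltil : ∀ n, (ltil n).Monic ∧ (ltil n).natDegree = n ∧
      ∀ j < n, ∫ τ, (ltil n).eval τ * τ ^ j ∂(rho₂ α w) = 0)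
    (c : ℝ) (hc : 0 < c)
    -- the Chebyshev constant theorem for E = [0,α³]:
    (hCheb : ∃ (T : ℕ → Polynomial ℝ) (M : ℕ → ℝ),
      (∀ n, (T n).Monic ∧ (T n).natDegree = n ∧
        ∀ τ ∈ Set.Icc (0:ℝ) (α ^ 3), |(T n).eval τ| ≤ M n) ∧
      Tendsto (fun n : ℕ => (M n) ^ (1 / (n : ℝ))) atTop (nhds c))
    -- regularity of ρ₂:
    (hreg₂ : Tendsto
      (fun n : ℕ => (Real.sqrt (∫ τ, ((ltil n).eval τ) ^ 2 ∂(rho₂ α w))) ^ (1 / (n : ℝ)))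
      atTop (nhds c)) :
    Tendsto
      (fun n : ℕ => (Real.sqrt (∫ τ, ((l n).eval τ) ^ 2 ∂(rho₁ α w))) ^ (1 / (n : ℝ)))
      atTop (nhds c) := by
  have hE : IsCompact (Set.Icc (0:ℝ) (α ^ 3)) := isCompact_Icc
  haveI hfin1 : IsFiniteMeasure (rho₁ α w) := rho₁_fin α hα w hw hwint
  have hle : rho₂ α w ≤ (ENNReal.ofReal α) • rho₁ α w := rho₂_le α hα w hw
  haveI hfin2 : IsFiniteMeasure (rho₂ α w) := by
    constructor
    calc rho₂ α w Set.univ ≤ (ENNReal.ofReal α • rho₁ α w) Set.univ := hle _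
      _ = ENNReal.ofReal α * rho₁ α w Set.univ := rfl
      _ < ⊤ := ENNReal.mul_lt_top ENNReal.ofReal_lt_top (measure_lt_top _ _)
  have hae1 := ae_mem_rho₁ α w
  have hae2 := ae_mem_rho₂ α w
  have hint1 := integrable_poly hE (rho₁ α w) hae1
  have hint2 := integrable_poly hE (rho₂ α w) hae2
  set K : ℝ := ((rho₁ α w) Set.univ).toReal with hKdef
  -- degenerate case
  by_cases hK : K = 0
  · exfalso
    have h1 : rho₁ α w = 0 := by
      refine Measure.measure_univ_eq_zero.mp ?_
      rcases (ENNReal.toReal_eq_zero_iff _).mp hK with h | h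
      · exact h
      · exact absurd h (measure_ne_top _ _)
    have h2 : rho₂ α w = 0 := by
      rw [h1, smul_zero] at hle
      exact le_antisymm hle (Measure.zero_le _)
    have hz : Tendsto (fun _ : ℕ => (0:ℝ)) atTop (nhds c) := by
      refine hreg₂.congr' ?_
      filter_upwards [eventually_ge_atTop 1] with n hn
      rw [h2]
      simp only [integral_zero_measure, Real.sqrt_zero]
      exact Real.zero_rpow (one_div_ne_zero (Nat.cast_ne_zero.mpr (by omega)))
    have := tendsto_nhds_unique hz tendsto_const_nhds
    linarith
  have hKpos : 0 < K := lt_of_le_of_ne ENNReal.toReal_nonneg (Ne.symm hK)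
  obtain ⟨T, M, hT, hM⟩ := hCheb
  have h0E : (0:ℝ) ∈ Set.Icc (0:ℝ) (α ^ 3) := ⟨le_refl _, by positivity⟩
  have hM0 : ∀ n, 0 ≤ M n := fun n => le_trans (abs_nonneg _) ((hT n).2.2 0 h0E)
  -- abbreviations
  set A : ℕ → ℝ := fun n => Real.sqrt (∫ τ, ((l n).eval τ) ^ 2 ∂(rho₁ α w)) with hA
  set D : ℕ → ℝ := fun n => Real.sqrt (∫ τ, ((ltil n).eval τ) ^ 2 ∂(rho₂ α w)) with hD
  -- upper bound : A n ≤ M n * sqrt K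
  have hupper : ∀ n, A n ≤ M n * Real.sqrt K := by
    intro n
    have h1 : ∫ τ, ((l n).eval τ) ^ 2 ∂(rho₁ α w)
        ≤ ∫ τ, ((T n).eval τ) ^ 2 ∂(rho₁ α w) :=
      min_ortho hE (rho₁ α w) hae1 (l n) (T n) n (hl n).1 (hl n).2.1 (hl n).2.2
        (hT n).1 (hT n).2.1
    have h2 : ∫ τ, ((T n).eval τ) ^ 2 ∂(rho₁ α w) ≤ (M n)^2 * K := by
      have hintT : Integrable (fun τ => ((T n).eval τ)^2) (rho₁ α w) := by
        have := hint1 ((T n)^2); refine this.congr ?_; filter_upwards with τ; simp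
      calc ∫ τ, ((T n).eval τ) ^ 2 ∂(rho₁ α w)
          ≤ ∫ _τ, (M n)^2 ∂(rho₁ α w) := by
            refine integral_mono_ae hintT (integrable_const _) ?_
            filter_upwards [hae1] with τ hτ
            calc ((T n).eval τ)^2 = |(T n).eval τ|^2 := (sq_abs _).symm
              _ ≤ (M n)^2 := by
                  exact pow_le_pow_left₀ (abs_nonneg _) ((hT n).2.2 τ hτ) 2
        _ = K * (M n)^2 := by rw [integral_const]; rfl
        _ = (M n)^2 * K := mul_comm _ _
    calc A n ≤ Real.sqrt ((M n)^2 * K) := Real.sqrt_le_sqrt (le_trans h1 h2)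
      _ = M n * Real.sqrt K := by
          rw [Real.sqrt_mul (sq_nonneg _), Real.sqrt_sq (hM0 n)]
  -- lower bound : D n ≤ sqrt α * A n
  have hlower : ∀ n, D n ≤ Real.sqrt α * A n := by
    intro n
    have h1 : ∫ τ, ((ltil n).eval τ) ^ 2 ∂(rho₂ α w)
        ≤ ∫ τ, ((l n).eval τ) ^ 2 ∂(rho₂ α w) :=
      min_ortho hE (rho₂ α w) hae2 (ltil n) (l n) n (hltil n).1 (hltil n).2.1
        (hltil n).2.2 (hl n).1 (hl n).2.1
    have hintl : Integrable (fun τ => ((l n).eval τ)^2) (rho₁ α w) := by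
      have := hint1 ((l n)^2); refine this.congr ?_; filter_upwards with τ; simp
    have h2 : ∫ τ, ((l n).eval τ) ^ 2 ∂(rho₂ α w) ≤ α * ∫ τ, ((l n).eval τ) ^ 2 ∂(rho₁ α w) := by
      calc ∫ τ, ((l n).eval τ) ^ 2 ∂(rho₂ α w)
          ≤ ∫ τ, ((l n).eval τ) ^ 2 ∂((ENNReal.ofReal α) • rho₁ α w) := by
            refine integral_mono_measure hle ?_ (hintl.smul_measure ENNReal.ofReal_ne_top)
            filter_upwards with τ using sq_nonneg _
        _ = α * ∫ τ, ((l n).eval τ) ^ 2 ∂(rho₁ α w) := by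
            rw [integral_smul_measure, ENNReal.toReal_ofReal hα.le, smul_eq_mul]
    calc D n ≤ Real.sqrt (α * ∫ τ, ((l n).eval τ) ^ 2 ∂(rho₁ α w)) :=
          Real.sqrt_le_sqrt (le_trans h1 h2)
      _ = Real.sqrt α * A n := Real.sqrt_mul hα.le _
  -- squeeze
  have hsα : (0:ℝ) < Real.sqrt α := Real.sqrt_pos.mpr hα
  have hsK : (0:ℝ) < Real.sqrt K := Real.sqrt_pos.mpr hKpos
  refine tendsto_of_tendsto_of_tendsto_of_le_of_le'
    (g := fun n : ℕ => (D n) ^ (1/(n:ℝ)) * ((Real.sqrt α) ^ (1/(n:ℝ)))⁻¹)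
    (h := fun n : ℕ => (M n) ^ (1/(n:ℝ)) * (Real.sqrt K) ^ (1/(n:ℝ)))
    ?_ ?_ ?_ ?_
  · have := hreg₂.mul ((rpow_one_div_tendsto_one hsα).inv₀ one_ne_zero)
    simpa using this
  · have := hM.mul (rpow_one_div_tendsto_one hsK)
    simpa using this
  · filter_upwards [eventually_ge_atTop 1] with n hn
    have he : (0:ℝ) ≤ 1/(n:ℝ) := by positivity
    have hpos : (0:ℝ) < (Real.sqrt α) ^ (1/(n:ℝ)) := Real.rpow_pos_of_pos hsα _
    rw [← div_eq_mul_inv, div_le_iff₀ hpos]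
    calc (D n) ^ (1/(n:ℝ)) ≤ (Real.sqrt α * A n) ^ (1/(n:ℝ)) :=
          Real.rpow_le_rpow (Real.sqrt_nonneg _) (hlower n) he
      _ = (Real.sqrt α) ^ (1/(n:ℝ)) * (A n) ^ (1/(n:ℝ)) :=
          Real.mul_rpow hsα.le (Real.sqrt_nonneg _)
      _ = (A n) ^ (1/(n:ℝ)) * (Real.sqrt α) ^ (1/(n:ℝ)) := mul_comm _ _
  · filter_upwards [eventually_ge_atTop 1] with n hn
    have he : (0:ℝ) ≤ 1/(n:ℝ) := by positivity
    calc (A n) ^ (1/(n:ℝ)) ≤ (M n * Real.sqrt K) ^ (1/(n:ℝ)) :=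
          Real.rpow_le_rpow (Real.sqrt_nonneg _) (hupper n) he
      _ = (M n) ^ (1/(n:ℝ)) * (Real.sqrt K) ^ (1/(n:ℝ)) :=
          Real.mul_rpow (hM0 n) (Real.sqrt_nonneg _)

end
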